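/- arXiv:2002.01509 — 2 statements merged into one kernel-verified Lean document; each statement's English description precedes it below -/
import Mathlib

section
/- Let X and Y be discrete real random variables taking values in [α, β] with α < β, and suppose the conditional expectation E[Y | X] ≤ 0 almost surely. Then for every λ > 0, E[exp(λ(X + Y))] ≤ exp(λ²(β − α)²/8) · E[exp(λX)]. -/
/-!
On the fiber `{X = x}` we have `exp (L * (X + Y)) = exp (L * x) * exp (L * Y)`, and under the
conditional law on that fiber `Y` takes values in `[α, β]` and has nonpositive mean, so Hoeffding's
lemma bounds its moment generating function at `L` by `exp (L ^ 2 * (β - α) ^ 2 / 8)`. Summing the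
resulting fiberwise inequalities over the countably many values of `X` gives the claim.
-/

open MeasureTheory ProbabilityTheory Real Set

namespace ProbabilityTheory

variable {Ω : Type*} [MeasurableSpace Ω] {μ : Measure Ω}

lemma mgf_le_of_mem_Icc_of_integral_nonpos [IsProbabilityMeasure μ] {Y : Ω → ℝ} {a b t : ℝ}
    (hm : AEMeasurable Y μ) (hb : ∀ᵐ ω ∂μ, Y ω ∈ Icc a b) (hc : μ[Y] ≤ 0) (ht : 0 ≤ t) :
    mgf Y μ t ≤ exp (t ^ 2 * (b - a) ^ 2 / 8) := by
  have hoeffding := (hasSubgaussianMGF_of_mem_Icc hm hb).mgf_le t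
  calc mgf Y μ t = exp (t * μ[Y]) * mgf (fun ω ↦ Y ω - μ[Y]) μ t := by
        rw [← mgf_const_add]; simp
    _ ≤ 1 * exp (((‖b - a‖₊ / 2) ^ 2 : NNReal) * t ^ 2 / 2) :=
      mul_le_mul (exp_le_one_iff.mpr (mul_nonpos_of_nonneg_of_nonpos ht hc)) hoeffding
        mgf_nonneg zero_le_one
    _ = exp (t ^ 2 * (b - a) ^ 2 / 8) := by
      push_cast
      rw [Real.norm_eq_abs, div_pow, sq_abs]
      ring_nf

lemma setIntegral_eq_measureReal_mul_integral_cond [IsFiniteMeasure μ] {E : Type*}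
    [NormedAddCommGroup E] [NormedSpace ℝ E] (s : Set Ω) (f : Ω → E) :
    ∫ ω in s, f ω ∂μ = μ.real s • ∫ ω, f ω ∂μ[|s] := by
  rcases eq_or_ne (μ s) 0 with hs | hs
  · simp [Measure.restrict_eq_zero.mpr hs, measureReal_def, hs]
  · rw [cond, integral_smul_measure, smul_smul, measureReal_def, ENNReal.toReal_inv,
      mul_inv_cancel₀ (ENNReal.toReal_ne_zero.mpr ⟨hs, measure_ne_top μ s⟩), one_smul]

variable {β : Type*} [MeasurableSpace β] [MeasurableSingletonClass β] {X : Ω → β}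

lemma hasSum_setIntegral_fiber {E : Type*} [NormedAddCommGroup E] [NormedSpace ℝ E]
    (hX : Measurable X) (hXc : (range X).Countable) {f : Ω → E} (hf : Integrable f μ) :
    HasSum (fun x : range X ↦ ∫ ω in X ⁻¹' {(x : β)}, f ω ∂μ) (∫ ω, f ω ∂μ) := by
  have : Countable (range X) := hXc.to_subtype
  have hcover : ⋃ x : range X, X ⁻¹' {(x : β)} = univ := by
    ext ω; simp
  have hdisj : Pairwise (Function.onFun Disjoint fun x : range X ↦ X ⁻¹' {(x : β)}) :=
    fun x y hxy ↦ (disjoint_singleton.mpr (Subtype.coe_injective.ne hxy)).preimage X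
  simpa [hcover] using hasSum_integral_iUnion (fun x ↦ hX (measurableSet_singleton _)) hdisj
    (hcover ▸ hf.integrableOn)

lemma integral_le_integral_of_forall_setIntegral_fiber_le (hX : Measurable X)
    (hXc : (range X).Countable) {f g : Ω → ℝ} (hf : Integrable f μ) (hg : Integrable g μ)
    (hfg : ∀ x, ∫ ω in X ⁻¹' {x}, f ω ∂μ ≤ ∫ ω in X ⁻¹' {x}, g ω ∂μ) :
    ∫ ω, f ω ∂μ ≤ ∫ ω, g ω ∂μ :=
  hasSum_le (fun x : range X ↦ hfg x) (hasSum_setIntegral_fiber hX hXc hf)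
    (hasSum_setIntegral_fiber hX hXc hg)

end ProbabilityTheory

lemma setIntegral_fiber_exp_mul_add_le {Ω : Type*} [MeasurableSpace Ω] {μ : Measure Ω}
    [IsFiniteMeasure μ] {X Y : Ω → ℝ} {a b t : ℝ} (hX : Measurable X) (hY : Measurable Y)
    (hYab : ∀ ω, Y ω ∈ Icc a b) (ht : 0 ≤ t) {x : ℝ}
    (hcond : μ (X ⁻¹' {x}) ≠ 0 → ∫ ω, Y ω ∂μ[|X ⁻¹' {x}] ≤ 0) :
    ∫ ω in X ⁻¹' {x}, exp (t * (X ω + Y ω)) ∂μ ≤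
      exp (t ^ 2 * (b - a) ^ 2 / 8) * ∫ ω in X ⁻¹' {x}, exp (t * X ω) ∂μ := by
  set A := X ⁻¹' {x}
  have hA : MeasurableSet A := hX (measurableSet_singleton x)
  have hsum : ∫ ω in A, exp (t * (X ω + Y ω)) ∂μ = exp (t * x) * (μ.real A * mgf Y μ[|A] t) := by
    rw [setIntegral_congr_fun hA (g := fun ω ↦ exp (t * x) * exp (t * Y ω)), integral_const_mul,
      setIntegral_eq_measureReal_mul_integral_cond, smul_eq_mul, mgf]
    intro ω hω
    simp only [A, mem_preimage, mem_singleton_iff] at hω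
    dsimp only
    rw [hω, ← exp_add, mul_add]
  have hX_const : ∫ ω in A, exp (t * X ω) ∂μ = μ.real A * exp (t * x) := by
    rw [setIntegral_congr_fun hA (g := fun _ ↦ exp (t * x)), setIntegral_const, smul_eq_mul]
    intro ω hω
    simp only [A, mem_preimage, mem_singleton_iff] at hω
    dsimp only
    rw [hω]
  have hmgf : μ.real A * mgf Y μ[|A] t ≤ μ.real A * exp (t ^ 2 * (b - a) ^ 2 / 8) := by
    rcases eq_or_ne (μ A) 0 with h0 | h0
    · simp [measureReal_def, h0]
    · have := cond_isProbabilityMeasure (μ := μ) h0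
      gcongr
      exact mgf_le_of_mem_Icc_of_integral_nonpos hY.aemeasurable (.of_forall hYab) (hcond h0) ht
  rw [hsum, hX_const]
  nlinarith [exp_pos (t * x)]

theorem stmt8_general {Ω : Type*} [MeasurableSpace Ω] (μ : Measure Ω) [IsProbabilityMeasure μ]
    (X Y : Ω → ℝ) (α β L : ℝ) (hL : 0 < L)
    (hX : Measurable X) (hY : Measurable Y)
    (hXc : (Set.range X).Countable)
    (hXrange : ∀ ω, X ω ∈ Set.Icc α β) (hYrange : ∀ ω, Y ω ∈ Set.Icc α β)
    (hcond : ∀ x : ℝ, μ (X ⁻¹' {x}) ≠ 0 → ∫ ω, Y ω ∂(μ[|X ⁻¹' {x}]) ≤ 0) :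
    ∫ ω, Real.exp (L * (X ω + Y ω)) ∂μ ≤
      Real.exp (L ^ 2 * (β - α) ^ 2 / 8) * ∫ ω, Real.exp (L * X ω) ∂μ := by
  have hXY : ∀ ω, X ω + Y ω ∈ Icc (α + α) (β + β) :=
    fun ω ↦ ⟨add_le_add (hXrange ω).1 (hYrange ω).1, add_le_add (hXrange ω).2 (hYrange ω).2⟩
  rw [← integral_const_mul]
  exact integral_le_integral_of_forall_setIntegral_fiber_le hX hXc
    (integrable_exp_mul_of_mem_Icc (hX.add hY).aemeasurable (.of_forall hXY))
    ((integrable_exp_mul_of_mem_Icc hX.aemeasurable (.of_forall hXrange)).const_mul _)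
    fun x ↦ (setIntegral_fiber_exp_mul_add_le hX hY hYrange hL.le (hcond x)).trans_eq
      (integral_const_mul _ _).symm

theorem stmt8 {Ω : Type*} [MeasurableSpace Ω] (μ : Measure Ω) [IsProbabilityMeasure μ]
    (X Y : Ω → ℝ) (α β L : ℝ) (hαβ : α < β) (hL : 0 < L)
    (hX : Measurable X) (hY : Measurable Y)
    (hXc : (Set.range X).Countable) (hYc : (Set.range Y).Countable)
    (hXrange : ∀ ω, X ω ∈ Set.Icc α β) (hYrange : ∀ ω, Y ω ∈ Set.Icc α β)
    (hcond : ∀ x : ℝ, μ (X ⁻¹' {x}) ≠ 0 → ∫ ω, Y ω ∂(μ[|X ⁻¹' {x}]) ≤ 0) :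
    ∫ ω, Real.exp (L * (X ω + Y ω)) ∂μ ≤
      Real.exp (L ^ 2 * (β - α) ^ 2 / 8) * ∫ ω, Real.exp (L * X ω) ∂μ :=
  stmt8_general μ X Y α β L hL hX hY hXc hXrange hYrange hcond
end

section
/- Let X_1, ..., X_n be discrete random variables taking values in [0,1], let γ ∈ [0,1], and suppose that E[X_k | X_1, ..., X_{k−1}] ≤ γ almost surely for every k ∈ {1, ..., n}. Then for every ε > 0, Pr(X_1 + ··· + X_n ≥ (γ + ε)n) ≤ exp(−2nε²). -/
/-!
Chernoff's bound with `t = 4ε` reduces the claim to `E[exp (t Sₙ)] ≤ exp (n (tγ + t²/8))`, where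
`Sₖ = X₀ + ⋯ + Xₖ₋₁`. Split `Ω` into the countably many events on which `X₀, …, Xₖ₋₁` take fixed
values. On each of them `exp (t Sₖ)` is constant, and Hoeffding's lemma under the conditional measure
bounds the conditional mean of `exp (t Xₖ)` by `exp (tγ + t²/8)`; summing over the events gives
`E[exp (t Sₖ₊₁)] ≤ exp (tγ + t²/8) E[exp (t Sₖ)]`.
-/

open MeasureTheory ProbabilityTheory Real Set

section
variable {Ω : Type*} [MeasurableSpace Ω] {μ : Measure Ω}

lemma integral_exp_mul_le_of_mem_Icc [IsProbabilityMeasure μ] {Y : Ω → ℝ}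
    (hY : AEMeasurable Y μ) (hb : ∀ᵐ ω ∂μ, Y ω ∈ Icc (0 : ℝ) 1) (t : ℝ) :
    ∫ ω, exp (t * Y ω) ∂μ ≤ exp (t * μ[Y] + t ^ 2 / 8) := by
  have h := (hasSubgaussianMGF_of_mem_Icc hY hb).mgf_le t
  have h' := mgf_add_const (X := fun ω => Y ω - μ[Y]) (μ := μ) (t := t) μ[Y]
  rw [mgf] at h'
  simp only [sub_add_cancel] at h'
  calc ∫ ω, exp (t * Y ω) ∂μ = mgf (fun ω => Y ω - μ[Y]) μ t * exp (t * μ[Y]) := h'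
    _ ≤ exp (t ^ 2 / 8) * exp (t * μ[Y]) := by
        gcongr
        refine h.trans_eq (congrArg exp ?_)
        norm_num
        ring
    _ = exp (t * μ[Y] + t ^ 2 / 8) := by rw [← exp_add, add_comm]

lemma setIntegral_le_mul_measureReal_of_integral_cond_le [IsFiniteMeasure μ] {s : Set Ω}
    {h : Ω → ℝ} {c : ℝ} (hc : μ s ≠ 0 → ∫ ω, h ω ∂μ[|s] ≤ c) :
    ∫ ω in s, h ω ∂μ ≤ c * μ.real s := by
  by_cases hs : μ s = 0
  · simp [Measure.restrict_eq_zero.mpr hs, measureReal_def, hs]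
  · have hpos : 0 < μ.real s := ENNReal.toReal_pos hs (measure_ne_top μ s)
    have := hc hs
    rw [ProbabilityTheory.cond, integral_smul_measure, smul_eq_mul, ENNReal.toReal_inv,
      ← measureReal_def, inv_mul_le_iff₀ hpos] at this
    linarith

lemma integral_comp_mul_le_of_integral_cond_le [IsFiniteMeasure μ] {β : Type*}
    [MeasurableSpace β] [MeasurableSingletonClass β] {T : Ω → β} (hT : Measurable T)
    (hTc : (range T).Countable) {g : β → ℝ} (hg : 0 ≤ g) {h : Ω → ℝ} {c : ℝ}
    (hgh : Integrable (fun ω => g (T ω) * h ω) μ) (hgT : Integrable (fun ω => g (T ω)) μ)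
    (hc : ∀ ω₀, μ (T ⁻¹' {T ω₀}) ≠ 0 → ∫ ω, h ω ∂μ[|T ⁻¹' {T ω₀}] ≤ c) :
    ∫ ω, g (T ω) * h ω ∂μ ≤ c * ∫ ω, g (T ω) ∂μ := by
  have : Countable (range T) := hTc.to_subtype
  let A : range T → Set Ω := fun v => T ⁻¹' {(v : β)}
  have hA : ∀ v, MeasurableSet (A v) := fun v => hT (measurableSet_singleton _)
  have hdisj : Pairwise (Function.onFun Disjoint A) := fun v w hvw =>
    (disjoint_singleton.mpr (Subtype.coe_injective.ne hvw)).preimage T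
  have hcover : ⋃ v, A v = univ := by
    ext ω
    simp [A]
  have hsum : ∀ {f : Ω → ℝ}, Integrable f μ →
      HasSum (fun v => ∫ ω in A v, f ω ∂μ) (∫ ω, f ω ∂μ) :=
    fun hf => by simpa [hcover] using hasSum_integral_iUnion hA hdisj (hcover ▸ hf.integrableOn)
  refine hasSum_le (fun v => ?_) (hsum hgh) ((hsum hgT).mul_left c)
  obtain ⟨_, ω₀, rfl⟩ := v
  have hfiber : ∀ ω ∈ A ⟨T ω₀, ω₀, rfl⟩, g (T ω) = g (T ω₀) := fun ω hω => by rw [hω]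
  calc ∫ ω in A _, g (T ω) * h ω ∂μ = ∫ ω in A _, g (T ω₀) * h ω ∂μ :=
        setIntegral_congr_fun (hA _) fun ω hω => by rw [hfiber ω hω]
    _ = g (T ω₀) * ∫ ω in A _, h ω ∂μ := integral_const_mul _ _
    _ ≤ g (T ω₀) * (c * μ.real (A _)) := mul_le_mul_of_nonneg_left
        (setIntegral_le_mul_measureReal_of_integral_cond_le (hc ω₀)) (hg _)
    _ = c * ∫ ω in A _, g (T ω₀) ∂μ := by rw [setIntegral_const, smul_eq_mul]; ring
    _ = c * ∫ ω in A _, g (T ω) ∂μ := by rw [setIntegral_congr_fun (hA _) hfiber]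
end

section Prefix
variable {Ω : Type*} {n : ℕ} (X : Fin n → Ω → ℝ)

def prefixVector (k : ℕ) (ω : Ω) : Fin n → ℝ := fun j => if (j : ℕ) < k then X j ω else 0

variable {X}

lemma measurable_prefixVector [MeasurableSpace Ω] (hX : ∀ j, Measurable (X j)) (k : ℕ) :
    Measurable (prefixVector X k) :=
  measurable_pi_lambda _ fun j => by
    unfold prefixVector
    split_ifs
    exacts [hX j, measurable_const]

lemma countable_range_prefixVector (hXc : ∀ j, (range (X j)).Countable) (k : ℕ) :
    (range (prefixVector X k)).Countable := by
  refine (countable_univ_pi fun j => (hXc j).insert 0).mono ?_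
  rintro _ ⟨ω, rfl⟩ j -
  unfold prefixVector
  split_ifs
  exacts [mem_insert_of_mem _ (mem_range_self ω), mem_insert 0 _]

lemma preimage_prefixVector_singleton (k : Fin n) (ω₀ : Ω) :
    prefixVector X k ⁻¹' {prefixVector X k ω₀} =
      {ω | ∀ j : Fin n, j < k → X j ω = prefixVector X k ω₀ j} := by
  ext ω
  simp only [mem_preimage, mem_singleton_iff, funext_iff, prefixVector, Fin.lt_def]
  refine ⟨fun h j hj => by simpa [hj] using h j, fun h j => ?_⟩
  split_ifs with hj
  · simpa [hj] using h j hj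
  · rfl

lemma sum_prefixVector_succ {k : ℕ} (hk : k < n) (ω : Ω) :
    ∑ j, prefixVector X (k + 1) ω j = ∑ j, prefixVector X k ω j + X ⟨k, hk⟩ ω := by
  rw [← Fintype.sum_ite_eq' (⟨k, hk⟩ : Fin n) (fun j => X j ω), ← Finset.sum_add_distrib]
  refine Finset.sum_congr rfl fun j _ => ?_
  simp only [prefixVector, Fin.ext_iff]
  split_ifs <;> simp_all <;> omega

lemma sum_prefixVector_self (ω : Ω) : ∑ j, prefixVector X n ω j = ∑ j, X j ω := by
  simp [prefixVector]

lemma sum_prefixVector_mem_Icc (hrange : ∀ j ω, X j ω ∈ Icc (0 : ℝ) 1) (k : ℕ) (ω : Ω) :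
    ∑ j, prefixVector X k ω j ∈ Icc (0 : ℝ) n := by
  have hmem : ∀ j, prefixVector X k ω j ∈ Icc (0 : ℝ) 1 := fun j => by
    unfold prefixVector
    split_ifs
    exacts [hrange j ω, ⟨le_rfl, zero_le_one⟩]
  refine ⟨Finset.sum_nonneg fun j _ => (hmem j).1, ?_⟩
  simpa using Finset.sum_le_sum fun j (_ : j ∈ Finset.univ) => (hmem j).2

lemma integral_exp_mul_sum_prefixVector_le [MeasurableSpace Ω] {μ : Measure Ω}
    [IsProbabilityMeasure μ]
    (hX : ∀ j, Measurable (X j)) (hXc : ∀ j, (range (X j)).Countable)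
    (hrange : ∀ j ω, X j ω ∈ Icc (0 : ℝ) 1) {γ t : ℝ} (ht : 0 ≤ t)
    (hcond : ∀ (k : Fin n) (v : Fin n → ℝ),
      μ {ω | ∀ j : Fin n, j < k → X j ω = v j} ≠ 0 →
      ∫ ω, X k ω ∂(μ[|{ω | ∀ j : Fin n, j < k → X j ω = v j}]) ≤ γ) :
    ∀ k ≤ n, ∫ ω, exp (t * ∑ j, prefixVector X k ω j) ∂μ ≤ exp (k * (t * γ + t ^ 2 / 8)) := by
  intro k
  induction k with
  | zero => simp [prefixVector]
  | succ k ih =>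
    intro hk
    have hint : ∀ m, Integrable (fun ω => exp (t * ∑ j, prefixVector X m ω j)) μ := fun m =>
      integrable_exp_mul_of_mem_Icc (Finset.measurable_sum _ fun j _ =>
        measurable_pi_apply j |>.comp (measurable_prefixVector hX m)).aemeasurable
        (.of_forall (sum_prefixVector_mem_Icc hrange m))
    have hstep : ∀ ω₀, μ (prefixVector X k ⁻¹' {prefixVector X k ω₀}) ≠ 0 →
        ∫ ω, exp (t * X ⟨k, hk⟩ ω) ∂μ[|prefixVector X k ⁻¹' {prefixVector X k ω₀}] ≤
          exp (t * γ + t ^ 2 / 8) := by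
      intro ω₀ hμ
      have := cond_isProbabilityMeasure hμ
      refine (integral_exp_mul_le_of_mem_Icc (hX _).aemeasurable
        (.of_forall (hrange _)) t).trans ?_
      gcongr
      rw [preimage_prefixVector_singleton (k := ⟨k, hk⟩)] at hμ ⊢
      exact hcond _ _ hμ
    calc ∫ ω, exp (t * ∑ j, prefixVector X (k + 1) ω j) ∂μ
        = ∫ ω, exp (t * ∑ j, prefixVector X k ω j) * exp (t * X ⟨k, hk⟩ ω) ∂μ := by
          simp_rw [sum_prefixVector_succ hk, mul_add, exp_add]
      _ ≤ exp (t * γ + t ^ 2 / 8) * ∫ ω, exp (t * ∑ j, prefixVector X k ω j) ∂μ := by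
          refine integral_comp_mul_le_of_integral_cond_le (measurable_prefixVector hX k)
            (countable_range_prefixVector hXc k) (g := fun v => exp (t * ∑ j, v j))
            (fun v => (exp_pos _).le) ?_ (hint k) hstep
          simpa only [sum_prefixVector_succ hk, mul_add, exp_add] using hint (k + 1)
      _ ≤ exp (t * γ + t ^ 2 / 8) * exp (k * (t * γ + t ^ 2 / 8)) := by
          gcongr
          exact ih (by omega)
      _ = exp ((k + 1 : ℕ) * (t * γ + t ^ 2 / 8)) := by
          rw [← exp_add]
          push_cast
          ring_nf

end Prefix

theorem stmt9_general {Ω : Type*} [MeasurableSpace Ω] (μ : Measure Ω) [IsProbabilityMeasure μ]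
    (n : ℕ) (X : Fin n → Ω → ℝ) (γ ε : ℝ)
    (hX : ∀ k, Measurable (X k)) (hXc : ∀ k, (Set.range (X k)).Countable)
    (hrange : ∀ k ω, X k ω ∈ Set.Icc (0 : ℝ) 1)
    (hε : 0 < ε)
    (hcond : ∀ (k : Fin n) (v : Fin n → ℝ),
      μ {ω | ∀ j : Fin n, j < k → X j ω = v j} ≠ 0 →
      ∫ ω, X k ω ∂(μ[|{ω | ∀ j : Fin n, j < k → X j ω = v j}]) ≤ γ) :
    (μ {ω | (γ + ε) * n ≤ ∑ j, X j ω}).toReal ≤ Real.exp (-2 * n * ε ^ 2) := by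
  have ht : (0 : ℝ) ≤ 4 * ε := by positivity
  have hmgf : mgf (fun ω => ∑ j, X j ω) μ (4 * ε) ≤ exp (n * (4 * ε * γ + (4 * ε) ^ 2 / 8)) := by
    rw [mgf]
    simpa only [sum_prefixVector_self] using
      integral_exp_mul_sum_prefixVector_le hX hXc hrange ht hcond n le_rfl
  have hint : Integrable (fun ω => exp (4 * ε * ∑ j, X j ω)) μ :=
    integrable_exp_mul_of_mem_Icc (Finset.measurable_sum _ fun j _ => hX j).aemeasurable
      (.of_forall fun ω => sum_prefixVector_self (X := X) ω ▸ sum_prefixVector_mem_Icc hrange n ω)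
  calc μ.real {ω | (γ + ε) * n ≤ ∑ j, X j ω}
      ≤ exp (-(4 * ε) * ((γ + ε) * n)) * mgf (fun ω => ∑ j, X j ω) μ (4 * ε) :=
        measure_ge_le_exp_mul_mgf _ ht hint
    _ ≤ exp (-(4 * ε) * ((γ + ε) * n)) * exp (n * (4 * ε * γ + (4 * ε) ^ 2 / 8)) := by gcongr
    _ = exp (-2 * n * ε ^ 2) := by
        rw [← exp_add]
        ring_nf

theorem stmt9 {Ω : Type*} [MeasurableSpace Ω] (μ : Measure Ω) [IsProbabilityMeasure μ]
    (n : ℕ) (X : Fin n → Ω → ℝ) (γ ε : ℝ)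
    (hX : ∀ k, Measurable (X k)) (hXc : ∀ k, (Set.range (X k)).Countable)
    (hrange : ∀ k ω, X k ω ∈ Set.Icc (0 : ℝ) 1)
    (hγ : γ ∈ Set.Icc (0 : ℝ) 1) (hε : 0 < ε)
    (hcond : ∀ (k : Fin n) (v : Fin n → ℝ),
      μ {ω | ∀ j : Fin n, j < k → X j ω = v j} ≠ 0 →
      ∫ ω, X k ω ∂(μ[|{ω | ∀ j : Fin n, j < k → X j ω = v j}]) ≤ γ) :
    (μ {ω | (γ + ε) * n ≤ ∑ j, X j ω}).toReal ≤ Real.exp (-2 * n * ε ^ 2) :=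
  stmt9_general μ n X γ ε hX hXc hrange hε hcond
end
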